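/- Transformation Theorem: Let A be a P-Frobenius algebra with Frobenius system (φ, xᵢ, qᵢ, yᵢ) and Nakayama automorphism ν, and let α be a k-algebra anti-automorphism of A. Then (φ∘α, χ·α⁻¹(yᵢ), qᵢ, α⁻¹(xᵢ)) is again a Frobenius system for A, and its Nakayama automorphism is α⁻¹ ∘ ν⁻¹ ∘ α. -/
import Mathlib


/-- Transformation Theorem: if `A` is a `P`-Frobenius algebra with Frobenius system
`(φ, xᵢ, qᵢ, yᵢ)` (with pairings `ePQ : P ⊗ Q → k`, `eQP : Q ⊗ P → k` related by the unit
`χ`, i.e. `qp = χ·pq`) and Nakayama automorphism `ν`, and `α` is a `k`-algebra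
anti-automorphism of `A`, then `(φ∘α, χ•α⁻¹(yᵢ), qᵢ, α⁻¹(xᵢ))` is again a Frobenius system
for `A`, whose Nakayama automorphism is `α⁻¹ ∘ ν⁻¹ ∘ α`. -/
theorem transformation_theorem (k A P Q : Type*) [CommRing k]
    [AddCommGroup P] [Module k P] [AddCommGroup Q] [Module k Q]
    [Ring A] [Algebra k A]
    (ePQ : P →ₗ[k] Q →ₗ[k] k) (eQP : Q →ₗ[k] P →ₗ[k] k)
    (χ : kˣ) (hχ : ∀ (p : P) (qq : Q), eQP qq p = (χ : k) * ePQ p qq)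
    (hfin : Module.Finite k A) (hproj : Module.Projective k A)
    (n : ℕ) (φ : A →ₗ[k] P) (x y : Fin n → A) (q : Fin n → Q)
    (hleft : ∀ a : A, ∑ i, ePQ (φ (a * x i)) (q i) • y i = a)
    (hright : ∀ a : A, ∑ i, eQP (q i) (φ (y i * a)) • x i = a)
    (ν : A ≃ₗ[k] A) (hν : ∀ z a : A, φ (z * a) = φ (ν a * z))
    (α : A ≃ₗ[k] A) (hα1 : α 1 = 1) (hαmul : ∀ a b : A, α (a * b) = α b * α a) :
    (∀ a : A,
      ∑ i, ePQ (φ (α (a * ((χ : k) • α.symm (y i))))) (q i) • α.symm (x i) = a) ∧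
    (∀ z a : A, φ (α (z * a)) = φ (α (α.symm (ν.symm (α a)) * z))) := by
  constructor
  · intro a
    have key : ∀ i : Fin n, ePQ (φ (α (a * ((χ : k) • α.symm (y i))))) (q i) • α.symm (x i)
        = eQP (q i) (φ (y i * α a)) • α.symm (x i) := by
      intro i
      rw [mul_smul_comm, map_smul, hαmul, α.apply_symm_apply, map_smul, map_smul,
          LinearMap.smul_apply, hχ, smul_eq_mul]
    calc ∑ i, ePQ (φ (α (a * ((χ : k) • α.symm (y i))))) (q i) • α.symm (x i)
        = ∑ i, eQP (q i) (φ (y i * α a)) • α.symm (x i) := Finset.sum_congr rfl fun i _ => key i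
      _ = α.symm (∑ i, eQP (q i) (φ (y i * α a)) • x i) := by simp [map_sum]
      _ = a := by rw [hright, α.symm_apply_apply]
  · intro z a
    rw [hαmul, hαmul, α.apply_symm_apply, hν (α z) (ν.symm (α a)), ν.apply_symm_apply]
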